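/- Let D be an ABAF, P_D its instantiated pBAF, and σ one of the admissible, complete, oldprf, preferred, grounded or stable semantics. If x ∈ A_D is expendable and G is the pBAF obtained by removing x from P_D, then {asms(E) | E ∈ σ(P_D)} = {asms(E) | E ∈ σ(G)}. -/
import Mathlib


/-! ## Bipolar argumentation frameworks (BAFs) -/

/-- A bipolar argumentation framework: a set of arguments together with
attack and support relations. -/
structure BAF (α : Type) where
  args : Set α
  att : Set (α × α)
  sup : Set (α × α)

namespace BAF

variable {α : Type} (F : BAF α)

/-- The closure of a set of arguments: `cl(E) = E ∪ {a ∈ A | ∃ e ∈ E, (e,a) ∈ Sup}`. -/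
def cl (E : Set α) : Set α := E ∪ {a ∈ F.args | ∃ e ∈ E, (e, a) ∈ F.sup}

/-- `E` is closed iff `E = cl(E)`. -/
def Closed (E : Set α) : Prop := E = F.cl E

/-- `E` is conflict-free iff no two members attack each other. -/
def ConflictFree (E : Set α) : Prop := ∀ x ∈ E, ∀ y ∈ E, (x, y) ∉ F.att

/-- `E` attacks the argument `a`. -/
def AttacksArg (E : Set α) (a : α) : Prop := ∃ e ∈ E, (e, a) ∈ F.att

/-- `E` attacks the set `S` (i.e. some element of it). -/
def AttacksSet (E S : Set α) : Prop := ∃ a ∈ S, F.AttacksArg E a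

/-- `E` defends `b` iff `E` attacks every closed set `S ⊆ args` attacking `b`. -/
def Defends (E : Set α) (b : α) : Prop :=
  ∀ S, S ⊆ F.args → F.Closed S → F.AttacksArg S b → F.AttacksSet E S

/-- The characteristic function `Γ(E) = {a ∈ A | E defends a}`. -/
def gamma (E : Set α) : Set α := {a ∈ F.args | F.Defends E a}

/-- `E` is admissible iff it is a closed, conflict-free set of arguments with `E ⊆ Γ(E)`. -/
def Admissible (E : Set α) : Prop :=
  E ⊆ F.args ∧ F.Closed E ∧ F.ConflictFree E ∧ E ⊆ F.gamma E

/-- `E` is complete iff it is admissible and `E = Γ(E)`. -/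
def Complete (E : Set α) : Prop := F.Admissible E ∧ E = F.gamma E

/-- `E` is preferred iff it is ⊆-maximal among complete sets. -/
def Preferred (E : Set α) : Prop := F.Complete E ∧ ∀ S, F.Complete S → E ⊆ S → S = E

/-- `E` is grounded iff it is admissible and equals the intersection of all complete
sets (taken to be `∅` when no complete set exists). -/
def Grounded (E : Set α) : Prop :=
  F.Admissible E ∧
    (((∃ S, F.Complete S) ∧ E = ⋂₀ {S | F.Complete S}) ∨
      ((¬ ∃ S, F.Complete S) ∧ E = ∅))

/-- `E` is stable iff it is admissible and attacks every argument outside of it. -/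
def Stable (E : Set α) : Prop :=
  F.Admissible E ∧ ∀ a ∈ F.args, a ∉ E → F.AttacksArg E a

/-- The BAF obtained by removing the argument `x`: the restriction to `args \ {x}`. -/
def remove (x : α) : BAF α where
  args := F.args \ {x}
  att := {p ∈ F.att | p.1 ≠ x ∧ p.2 ≠ x}
  sup := {p ∈ F.sup | p.1 ≠ x ∧ p.2 ≠ x}

end BAF

/-- The four complete-based semantics: complete, grounded, stable, preferred. -/
inductive Sem4 where
  | com | grd | stb | prf

/-- The σ-extensions of a BAF, for σ among complete, grounded, stable, preferred. -/
def BAF.ext {α : Type} (F : BAF α) : Sem4 → Set α → Prop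
  | .com => F.Complete
  | .grd => F.Grounded
  | .stb => F.Stable
  | .prf => F.Preferred

/-! ## Premise-augmented BAFs (pBAFs) -/

/-- A premise-augmented BAF: a BAF together with a premise function. -/
structure PBAF (α β : Type) where
  toBAF : BAF α
  prem : α → Set β

namespace PBAF

variable {α β : Type} (P : PBAF α β)

/-- The premises of a set of arguments: `prem(E) = ⋃ a ∈ E, prem(a)`. -/
def premSet (E : Set α) : Set β := ⋃ a ∈ E, P.prem a

/-- `E` is exhaustive iff every argument whose premises are contained in `prem(E)`
belongs to `E`. -/
def Exhaustive (E : Set α) : Prop :=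
  ∀ a ∈ P.toBAF.args, P.prem a ⊆ P.premSet E → a ∈ E

/-- `E` is admissible in a pBAF iff it is admissible in the underlying BAF and exhaustive. -/
def Admissible (E : Set α) : Prop := P.toBAF.Admissible E ∧ P.Exhaustive E

/-- `oldprf`: ⊆-maximal among the pBAF-admissible sets. -/
def OldPrf (E : Set α) : Prop := P.Admissible E ∧ ∀ S, P.Admissible S → E ⊆ S → S = E

/-- The pBAF obtained by removing the argument `x`. -/
def remove (x : α) : PBAF α β := ⟨P.toBAF.remove x, P.prem⟩

end PBAF

/-- The six semantics for pBAFs: admissible, complete, oldprf, preferred, grounded, stable. -/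
inductive Sem6 where
  | adm | com | oldprf | prf | grd | stb

/-- The σ-extensions of a pBAF. The complete, preferred, grounded and stable
sets are those of the underlying BAF. -/
def PBAF.ext {α β : Type} (P : PBAF α β) : Sem6 → Set α → Prop
  | .adm => P.Admissible
  | .com => P.toBAF.Complete
  | .oldprf => P.OldPrf
  | .prf => P.toBAF.Preferred
  | .grd => P.toBAF.Grounded
  | .stb => P.toBAF.Stable

/-! ## Assumption-based argumentation frameworks (ABAFs) -/

/-- A rule, with a head atom and a finite body of atoms. -/
structure ABARule (α : Type) where
  head : α
  body : Finset α
deriving DecidableEq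

/-- An assumption-based argumentation framework `(L, R, A, ‾)`. -/
structure ABAF (α : Type) [DecidableEq α] where
  L : Finset α
  R : Finset (ABARule α)
  A : Finset α
  A_nonempty : A.Nonempty
  A_sub_L : A ⊆ L
  contrary : α → α
  rules_wf : ∀ r ∈ R, r.head ∈ L ∧ r.body ⊆ L
  contrary_mem_L : ∀ a ∈ A, contrary a ∈ L

/-- Tree-based arguments: either a single assumption leaf, or an inner node
(labeled with the head of a rule) with a list of child subtrees, one for each
body element of the rule.  (A node with the empty list of children represents
an application of a rule with empty body, i.e. a node whose single child is
labeled `⊤`.) -/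
inductive ATree (α : Type) where
  | asm : α → ATree α
  | node : α → List (ATree α) → ATree α

namespace ATree

/-- The label of the root, i.e. the conclusion of the argument. -/
def root {α : Type} : ATree α → α
  | .asm a => a
  | .node p _ => p

/-- `t.IsAsmLeaf a` holds iff `a` is the label of some (assumption) leaf of `t`. -/
inductive IsAsmLeaf {α : Type} : ATree α → α → Prop
  | asm (a : α) : IsAsmLeaf (ATree.asm a) a
  | node {p : α} {cs : List (ATree α)} {c : ATree α} {a : α} :
      c ∈ cs → IsAsmLeaf c a → IsAsmLeaf (ATree.node p cs) a

/-- The support of a tree-based argument: the set of its assumption leaf labels. -/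
def asms {α : Type} (t : ATree α) : Set α := {a | t.IsAsmLeaf a}

/-- `Subarg t' t`: `t'` is a sub-argument (rooted labeled subtree whose leaves are
among the leaves) of `t`. -/
inductive Subarg {α : Type} : ATree α → ATree α → Prop
  | refl (t : ATree α) : Subarg t t
  | node {t c : ATree α} {p : α} {cs : List (ATree α)} :
      c ∈ cs → Subarg t c → Subarg t (ATree.node p cs)

end ATree

namespace ABAF

/-- Well-formedness of a tree-based argument w.r.t. an ABAF `D`: assumption
leaves are labeled by assumptions, and each inner node is labeled by the head
of a rule of `D` and has exactly `|body(r)|` children whose roots are the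
distinct elements of `body(r)`. -/
inductive WF {α : Type} [DecidableEq α] (D : ABAF α) : ATree α → Prop
  | asm {a : α} : a ∈ D.A → WF D (ATree.asm a)
  | node {p : α} {cs : List (ATree α)} (r : ABARule α) :
      r ∈ D.R → r.head = p →
      (cs.map ATree.root).Nodup →
      (cs.map ATree.root).toFinset = r.body →
      (∀ c ∈ cs, WF D c) →
      WF D (ATree.node p cs)

variable {α : Type} [DecidableEq α] (D : ABAF α)

/-- `A_D`: the set of all tree-based arguments of `D`. -/
def argsSet : Set (ATree α) := {t | D.WF t}

/-- `Th_D(S)`: the conclusions derivable from (subsets of) `S`. -/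
def Th (S : Set α) : Set α := {p | ∃ t, D.WF t ∧ t.root = p ∧ t.asms ⊆ S}

/-- `cl(S) = Th_D(S) ∩ A`. -/
def clA (S : Set α) : Set α := D.Th S ∩ ↑D.A

/-- An argument `S ⊢ p` is derivation redundant iff there is an argument
`S' ⊢ p ∈ A_D` with `S' ⊊ S`. -/
def DerivRedundant (x : ATree α) : Prop :=
  ∃ y, D.WF y ∧ y.root = x.root ∧ y.asms ⊂ x.asms

/-- An argument `S ⊢ p` is expendable iff `p ∉ A ∪ {‾a | a ∈ A}`. -/
def Expendable (x : ATree α) : Prop :=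
  x.root ∉ (↑D.A : Set α) ∪ D.contrary '' ↑D.A

/-- An argument `x = (S ⊢ p)` is assumption redundant iff it has a proper
sub-argument of the form `S' ⊢ a` with `S' ⊆ S` and `a ∈ A`. -/
def AsmRedundant (x : ATree α) : Prop :=
  ∃ t, ATree.Subarg t x ∧ t ≠ x ∧ t.asms ⊆ x.asms ∧ t.root ∈ D.A

/-- The instantiated BAF `F_D` of an ABAF `D`. -/
def instBAF : BAF (ATree α) where
  args := {t | D.WF t}
  att := {p | D.WF p.1 ∧ D.WF p.2 ∧ ∃ b ∈ p.2.asms, p.1.root = D.contrary b}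
  sup := {p | D.WF p.1 ∧ D.WF p.2 ∧
            ∃ a ∈ D.A, p.2 = ATree.asm a ∧ (a : α) ∈ D.clA p.1.asms}

/-- The instantiated pBAF `P_D` of an ABAF `D`, with `prem(S ⊢ p) = S`. -/
def instPBAF : PBAF (ATree α) α := ⟨D.instBAF, ATree.asms⟩

/-- The non-redundant arguments `A*_D`: obtained from `A_D` by removing all
derivation redundant arguments, then all expendable arguments, then all
assumption redundant arguments. -/
def nonRedundant : Set (ATree α) :=
  {t | D.WF t ∧ ¬ D.DerivRedundant t ∧ ¬ D.Expendable t ∧ ¬ D.AsmRedundant t}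

/-- The non-redundant core of `D`: the BAF whose arguments are the pairs
`(S, p)` for `S ⊢ p ∈ A*_D`, with the induced attack and support relations. -/
def core : BAF (Set α × α) where
  args := {x | ∃ t ∈ D.nonRedundant, x = (t.asms, t.root)}
  att := {p | ∃ b ∈ p.2.1, p.1.2 = D.contrary b}
  sup := {p | ∃ a ∈ D.A, p.2 = ({a}, a) ∧ (a : α) ∈ D.clA p.1.1}

/-! ### ABA semantics on assumption sets -/

/-- `S` attacks `T` iff `‾b ∈ Th_D(S)` for some `b ∈ T`. -/
def SAttacks (S T : Set α) : Prop := ∃ b ∈ T, D.contrary b ∈ D.Th S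

/-- `S` is conflict-free iff it does not attack itself. -/
def SConflictFree (S : Set α) : Prop := ¬ D.SAttacks S S

/-- `S` is closed iff `S = cl(S)`. -/
def SClosed (S : Set α) : Prop := S = D.clA S

/-- `S` defends `a` iff `S` attacks every closed `V ⊆ A` attacking `a`. -/
def SDefends (S : Set α) (a : α) : Prop :=
  ∀ V ⊆ (↑D.A : Set α), D.SClosed V → D.SAttacks V {a} → D.SAttacks S V

/-- `S` is admissible iff it is a closed, conflict-free set of assumptions
defending each of its elements. -/
def SAdmissible (S : Set α) : Prop :=
  S ⊆ ↑D.A ∧ D.SClosed S ∧ D.SConflictFree S ∧ ∀ a ∈ S, D.SDefends S a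

/-- `S` is complete iff it is admissible and contains every assumption it defends. -/
def SComplete (S : Set α) : Prop :=
  D.SAdmissible S ∧ ∀ a ∈ D.A, D.SDefends S a → a ∈ S

/-- `S` is preferred iff it is ⊆-maximal among complete sets. -/
def SPreferred (S : Set α) : Prop :=
  D.SComplete S ∧ ∀ T, D.SComplete T → S ⊆ T → T = S

/-- `S` is grounded iff it is admissible and equal to the intersection of all
complete sets (taken to be `∅` when no complete set exists). -/
def SGrounded (S : Set α) : Prop :=
  D.SAdmissible S ∧
    (((∃ T, D.SComplete T) ∧ S = ⋂₀ {T | D.SComplete T}) ∨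
      ((¬ ∃ T, D.SComplete T) ∧ S = ∅))

/-- `S` is stable iff it is admissible and attacks every assumption outside of it. -/
def SStable (S : Set α) : Prop :=
  D.SAdmissible S ∧ ∀ a ∈ D.A, (a : α) ∉ S → D.SAttacks S {a}

/-- ⊆-maximal admissible assumption sets (`oldprf` for ABAFs). -/
def SOldPrf (S : Set α) : Prop :=
  D.SAdmissible S ∧ ∀ T, D.SAdmissible T → S ⊆ T → T = S

/-- The σ-extensions of an ABAF, σ among complete, grounded, stable, preferred. -/
def ext : Sem4 → Set α → Prop
  | .com => D.SComplete
  | .grd => D.SGrounded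
  | .stb => D.SStable
  | .prf => D.SPreferred

/-- The σ-extensions of an ABAF, σ among admissible, complete, oldprf,
preferred, grounded, stable. -/
def ext6 : Sem6 → Set α → Prop
  | .adm => D.SAdmissible
  | .com => D.SComplete
  | .oldprf => D.SOldPrf
  | .prf => D.SPreferred
  | .grd => D.SGrounded
  | .stb => D.SStable

end ABAF

/-- `asms(E)` for a set `E` of tree-based arguments. -/
def asmsOf {α : Type} (E : Set (ATree α)) : Set α := ⋃ x ∈ E, x.asms

/-- `asms(E)` for a set `E` of core arguments `(S, p)`. -/
def asmsOfCore {α : Type} (E : Set (Set α × α)) : Set α := ⋃ x ∈ E, x.1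
namespace ABAFRemoval
set_option linter.unusedSectionVars false

variable {α : Type} [DecidableEq α] {D : ABAF α} {x : ATree α}

lemma isAsmLeaf_asm_iff {b a : α} : (ATree.asm b).IsAsmLeaf a ↔ a = b := by
  constructor
  · intro h; cases h; rfl
  · rintro rfl; exact .asm a

lemma wf_asms_sub {t : ATree α} (ht : D.WF t) : ∀ a, t.IsAsmLeaf a → a ∈ D.A := by
  induction ht with
  | asm hb => intro a ha; rw [isAsmLeaf_asm_iff] at ha; subst ha; assumption
  | node r hr hh hnd htf hall ih =>
      intro a ha
      cases ha with
      | node hc hleaf => exact ih _ hc a hleaf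

lemma mem_att {s t : ATree α} :
    (s, t) ∈ (D.instBAF).att ↔
      D.WF s ∧ D.WF t ∧ ∃ b ∈ t.asms, s.root = D.contrary b := Iff.rfl

lemma mem_sup {s t : ATree α} :
    (s, t) ∈ (D.instBAF).sup ↔
      D.WF s ∧ D.WF t ∧ ∃ a ∈ D.A, t = ATree.asm a ∧ (a : α) ∈ D.clA s.asms := Iff.rfl

lemma mem_args {t : ATree α} : t ∈ (D.instBAF).args ↔ D.WF t := Iff.rfl

lemma not_attacker (hexp : D.Expendable x) {t : ATree α} : (x, t) ∉ (D.instBAF).att := by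
  rintro ⟨hwx, hwt, b, hb, hroot⟩
  exact hexp (Or.inr ⟨b, by exact_mod_cast wf_asms_sub hwt b hb, hroot.symm⟩)

lemma not_sup_target (hexp : D.Expendable x) {t : ATree α} : (t, x) ∉ (D.instBAF).sup := by
  rintro ⟨_, _, a, ha, hxa, _⟩
  apply hexp (Or.inl _)
  subst hxa
  exact_mod_cast ha

lemma ne_x_of_root_mem (hexp : D.Expendable x) {t : ATree α} (h : t.root ∈ D.A) : t ≠ x := by
  rintro rfl
  exact hexp (Or.inl (by exact_mod_cast h))

lemma asm_ne_x (hexp : D.Expendable x) {b : α} (hb : b ∈ D.A) : ATree.asm b ≠ x :=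
  ne_x_of_root_mem hexp (by exact hb)

lemma mem_Th_self {S : Set α} {b : α} (hb : b ∈ D.A) (hbS : b ∈ S) : b ∈ D.Th S :=
  ⟨ATree.asm b, .asm hb, rfl, by
    intro a ha; have : a = b := isAsmLeaf_asm_iff.mp ha; subst this; exact hbS⟩

lemma sup_self {t : ATree α} (ht : D.WF t) {b : α} (hb : t.IsAsmLeaf b) :
    (t, ATree.asm b) ∈ (D.instBAF).sup := by
  have hbA := wf_asms_sub ht b hb
  exact ⟨ht, .asm hbA, b, hbA, rfl, mem_Th_self hbA hb, by exact_mod_cast hbA⟩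

lemma sup_of_witness {t u : ATree α} (ht : D.WF t) (hu : D.WF u) (hsub : u.asms ⊆ t.asms)
    (haA : u.root ∈ D.A) : (t, ATree.asm u.root) ∈ (D.instBAF).sup :=
  ⟨ht, .asm haA, u.root, haA, rfl, ⟨⟨u, hu, rfl, hsub⟩, by exact_mod_cast haA⟩⟩

end ABAFRemoval
namespace ABAFRemoval

set_option linter.unusedSectionVars false
variable {α : Type} [DecidableEq α] {D : ABAF α} {x : ATree α}
variable {E S : Set (ATree α)} {t : ATree α}

lemma _root_.BAF.defends_mono {β : Type} {F : BAF β} {E E' : Set β} {t : β} (h : E ⊆ E') :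
    F.Defends E t → F.Defends E' t := fun hd S h1 h2 h3 =>
  let ⟨a, ha, e, he, hatt⟩ := hd S h1 h2 h3
  ⟨a, ha, e, h he, hatt⟩

lemma _root_.BAF.admissible_empty {β : Type} (F : BAF β) : F.Admissible ∅ := by
  refine ⟨Set.empty_subset _, ?_, ?_, Set.empty_subset _⟩
  · apply Set.Subset.antisymm Set.subset_union_left
    rintro a (h | ⟨ha, e, he, hsup⟩)
    · exact h
    · exact absurd he (Set.notMem_empty e)
  · intro a ha; exact absurd ha (Set.notMem_empty a)

lemma attacksArg_erase (hexp : D.Expendable x) :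
    (D.instBAF).AttacksArg E t ↔ (D.instBAF).AttacksArg (E \ {x}) t := by
  constructor
  · rintro ⟨e, he, hatt⟩
    refine ⟨e, ⟨he, fun hm => ?_⟩, hatt⟩
    rw [Set.mem_singleton_iff] at hm; subst hm
    exact not_attacker hexp hatt
  · rintro ⟨e, he, hatt⟩; exact ⟨e, he.1, hatt⟩

lemma attacksSet_erase (hexp : D.Expendable x) :
    (D.instBAF).AttacksSet E S ↔ (D.instBAF).AttacksSet (E \ {x}) S :=
  exists_congr fun a => and_congr_right fun _ => attacksArg_erase hexp

lemma defends_erase (hexp : D.Expendable x) :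
    (D.instBAF).Defends E t ↔ (D.instBAF).Defends (E \ {x}) t := by
  constructor <;> intro h S h1 h2 h3
  · exact (attacksSet_erase hexp).mp (h S h1 h2 h3)
  · exact (attacksSet_erase hexp).mpr (h S h1 h2 h3)

lemma gamma_erase (hexp : D.Expendable x) :
    (D.instBAF).gamma E = (D.instBAF).gamma (E \ {x}) := by
  ext t; exact and_congr_right fun _ => defends_erase hexp

lemma cl_rm (hexp : D.Expendable x) (hE : x ∉ E) :
    ((D.instBAF).remove x).cl E = (D.instBAF).cl E := by
  ext a
  simp only [BAF.cl, BAF.remove, Set.mem_union, Set.mem_setOf_eq, Set.mem_diff,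
    Set.mem_singleton_iff, ne_eq]
  constructor
  · rintro (h | ⟨⟨ha, hax⟩, e, he, hsup, h1, h2⟩)
    · exact Or.inl h
    · exact Or.inr ⟨ha, e, he, hsup⟩
  · rintro (h | ⟨ha, e, he, hsup⟩)
    · exact Or.inl h
    · have hax : a ≠ x := fun h' => not_sup_target hexp (h' ▸ hsup)
      exact Or.inr ⟨⟨ha, hax⟩, e, he, hsup, fun h' => hE (h' ▸ he), hax⟩

lemma closed_rm (hexp : D.Expendable x) (hE : x ∉ E) :
    ((D.instBAF).remove x).Closed E ↔ (D.instBAF).Closed E := by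
  unfold BAF.Closed; rw [cl_rm hexp hE]

lemma closed_sdiff (hexp : D.Expendable x) (h : (D.instBAF).Closed E) :
    (D.instBAF).Closed (E \ {x}) := by
  apply Set.Subset.antisymm Set.subset_union_left
  rintro a (h' | ⟨ha, e, he, hsup⟩)
  · exact h'
  · have haE : a ∈ E := by rw [h]; exact Or.inr ⟨ha, e, he.1, hsup⟩
    exact ⟨haE, fun h' => not_sup_target hexp ((Set.mem_singleton_iff.mp h') ▸ hsup)⟩

lemma attacksArg_rm (hE : x ∉ E) (ht : t ≠ x) :
    ((D.instBAF).remove x).AttacksArg E t ↔ (D.instBAF).AttacksArg E t := by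
  constructor
  · rintro ⟨e, he, hatt, _, _⟩; exact ⟨e, he, hatt⟩
  · rintro ⟨e, he, hatt⟩
    exact ⟨e, he, hatt, fun h' => hE (h' ▸ he), ht⟩

lemma cf_rm (hE : x ∉ E) :
    ((D.instBAF).remove x).ConflictFree E ↔ (D.instBAF).ConflictFree E := by
  constructor <;> intro h a ha b hb hatt
  · exact h a ha b hb ⟨hatt, fun h' => hE (h' ▸ ha), fun h' => hE (h' ▸ hb)⟩
  · exact h a ha b hb hatt.1

lemma defends_rm (hexp : D.Expendable x) (hE : x ∉ E) (ht : t ≠ x) :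
    ((D.instBAF).remove x).Defends E t ↔ (D.instBAF).Defends E t := by
  constructor
  · intro h S hS hcl hattack
    have hS' : S \ {x} ⊆ ((D.instBAF).remove x).args := fun a ha => ⟨hS ha.1, ha.2⟩
    have hxd : x ∉ S \ {x} := fun h' => h'.2 rfl
    have hcl' : ((D.instBAF).remove x).Closed (S \ {x}) :=
      (closed_rm hexp hxd).mpr (closed_sdiff hexp hcl)
    have hatt' : ((D.instBAF).remove x).AttacksArg (S \ {x}) t := by
      rw [attacksArg_rm hxd ht]
      exact (attacksArg_erase hexp).mp hattack
    obtain ⟨a, ha, hEa⟩ := h _ hS' hcl' hatt'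
    exact ⟨a, ha.1, ((attacksArg_rm hE (fun h' => ha.2 h')).mp hEa)⟩
  · intro h S hS hcl hattack
    have hxS : x ∉ S := fun h' => (hS h').2 rfl
    obtain ⟨a, ha, hEa⟩ := h S (fun a ha => (hS ha).1) ((closed_rm hexp hxS).mp hcl)
      ((attacksArg_rm hxS ht).mp hattack)
    exact ⟨a, ha, (attacksArg_rm hE (fun h' => hxS (h' ▸ ha))).mpr hEa⟩

lemma gamma_rm (hexp : D.Expendable x) (hE : x ∉ E) :
    ((D.instBAF).remove x).gamma E = (D.instBAF).gamma E \ {x} := by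
  ext t
  constructor
  · rintro ⟨⟨h1, h2⟩, hd⟩
    exact ⟨⟨h1, (defends_rm hexp hE h2).mp hd⟩, h2⟩
  · rintro ⟨⟨h1, hd⟩, h2⟩
    exact ⟨⟨h1, h2⟩, (defends_rm hexp hE h2).mpr hd⟩

lemma attacksArg_leaf (ht : D.WF t) :
    (D.instBAF).AttacksArg S t ↔ ∃ b ∈ t.asms, (D.instBAF).AttacksArg S (ATree.asm b) := by
  constructor
  · rintro ⟨e, he, hwe, hwt, b, hb, hroot⟩
    exact ⟨b, hb, e, he, hwe, .asm (wf_asms_sub ht b hb), b, .asm b, hroot⟩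
  · rintro ⟨b, hb, e, he, hwe, _, b', hb', hroot⟩
    have : b' = b := isAsmLeaf_asm_iff.mp hb'
    subst this
    exact ⟨e, he, hwe, ht, b', hb, hroot⟩

lemma defends_leaf (ht : D.WF t) {E : Set (ATree α)} :
    (D.instBAF).Defends E t ↔ ∀ b ∈ t.asms, (D.instBAF).Defends E (ATree.asm b) := by
  constructor
  · intro h b hb S hS hcl hatt
    exact h S hS hcl ((attacksArg_leaf ht).mpr ⟨b, hb, hatt⟩)
  · intro h S hS hcl hatt
    obtain ⟨b, hb, hatt'⟩ := (attacksArg_leaf ht).mp hatt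
    exact h b hb S hS hcl hatt'

lemma admissible_sdiff (hexp : D.Expendable x) (h : (D.instBAF).Admissible E) :
    (D.instBAF).Admissible (E \ {x}) := by
  refine ⟨fun a ha => h.1 ha.1, closed_sdiff hexp h.2.1,
    fun a ha b hb hatt => h.2.2.1 a ha.1 b hb.1 hatt, fun a ha => ?_⟩
  have := h.2.2.2 ha.1
  rwa [gamma_erase hexp] at this

lemma admissible_rm (hexp : D.Expendable x) (hE : x ∉ E) :
    ((D.instBAF).remove x).Admissible E ↔ (D.instBAF).Admissible E := by
  constructor
  · rintro ⟨h1, h2, h3, h4⟩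
    refine ⟨fun a ha => (h1 ha).1, (closed_rm hexp hE).mp h2, (cf_rm hE).mp h3, fun a ha => ?_⟩
    have := h4 ha
    rw [gamma_rm hexp hE] at this
    exact this.1
  · rintro ⟨h1, h2, h3, h4⟩
    refine ⟨fun a ha => ⟨h1 ha, fun h' => hE (h' ▸ ha)⟩, (closed_rm hexp hE).mpr h2,
      (cf_rm hE).mpr h3, fun a ha => ?_⟩
    rw [gamma_rm hexp hE]
    exact ⟨h4 ha, fun h' => hE ((Set.mem_singleton_iff.mp h') ▸ ha)⟩

end ABAFRemoval
namespace ABAFRemoval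
set_option linter.unusedSectionVars false
variable {α : Type} [DecidableEq α] {D : ABAF α} {x : ATree α}
variable {E E' S : Set (ATree α)} {t : ATree α}

lemma attacksArg_mono (h : E ⊆ E') {F : BAF (ATree α)} :
    F.AttacksArg E t → F.AttacksArg E' t := fun ⟨e, he, ha⟩ => ⟨e, h he, ha⟩

lemma mem_asmsOf {b : α} : b ∈ asmsOf E ↔ ∃ e ∈ E, e.IsAsmLeaf b := by
  simp [asmsOf, ATree.asms, Set.mem_iUnion]

lemma asmsOf_mono (h : E ⊆ E') : asmsOf E ⊆ asmsOf E' := by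
  intro b hb
  obtain ⟨e, he, hl⟩ := mem_asmsOf.mp hb
  exact mem_asmsOf.mpr ⟨e, h he, hl⟩

lemma closed_asm_mem (hexp : D.Expendable x) (hx : D.WF x)
    (hcl : (D.instBAF).Closed E) (hxE : x ∈ E) {b : α} (hb : x.IsAsmLeaf b) :
    ATree.asm b ∈ E \ {x} := by
  have hbA := wf_asms_sub hx b hb
  have : ATree.asm b ∈ (D.instBAF).cl E :=
    Or.inr ⟨ABAF.WF.asm hbA, x, hxE, sup_self hx hb⟩
  rw [← hcl] at this
  exact ⟨this, fun h' => asm_ne_x hexp hbA (Set.mem_singleton_iff.mp h')⟩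

lemma asmsOf_sdiff (hexp : D.Expendable x) (hx : D.WF x)
    (hcl : (D.instBAF).Closed E) : asmsOf (E \ {x}) = asmsOf E := by
  apply Set.Subset.antisymm (asmsOf_mono Set.diff_subset)
  intro b hb
  obtain ⟨e, he, hl⟩ := mem_asmsOf.mp hb
  by_cases hex : e = x
  · subst hex
    exact mem_asmsOf.mpr ⟨ATree.asm b, closed_asm_mem hexp hx hcl he hl, .asm b⟩
  · exact mem_asmsOf.mpr ⟨e, ⟨he, hex⟩, hl⟩

lemma asmsOf_insert_x (h : ∀ b, x.IsAsmLeaf b → ATree.asm b ∈ E) :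
    asmsOf (insert x E) = asmsOf E := by
  apply Set.Subset.antisymm _ (asmsOf_mono (Set.subset_insert x E))
  intro b hb
  obtain ⟨e, he, hl⟩ := mem_asmsOf.mp hb
  rcases he with rfl | he
  · exact mem_asmsOf.mpr ⟨ATree.asm b, h b hl, .asm b⟩
  · exact mem_asmsOf.mpr ⟨e, he, hl⟩

lemma gamma_insert (hexp : D.Expendable x) :
    (D.instBAF).gamma (insert x E) = (D.instBAF).gamma E := by
  rw [gamma_erase hexp, Set.insert_diff_of_mem E (Set.mem_singleton x), ← gamma_erase hexp]

lemma adm_forward (hexp : D.Expendable x) (h : (D.instBAF).Admissible E) :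
    ((D.instBAF).remove x).Admissible (E \ {x}) :=
  (admissible_rm hexp (fun h' => h'.2 rfl)).mpr (admissible_sdiff hexp h)

lemma complete_sdiff (hexp : D.Expendable x) (h : (D.instBAF).Complete E) :
    ((D.instBAF).remove x).Complete (E \ {x}) := by
  have hxd : x ∉ E \ {x} := fun h' => h'.2 rfl
  refine ⟨adm_forward hexp h.1, ?_⟩
  rw [gamma_rm hexp hxd, ← gamma_erase hexp, ← h.2]

lemma complete_mem_defends (hexp : D.Expendable x) (h : (D.instBAF).Complete E)
    (hxE : x ∈ E) : (D.instBAF).Defends (E \ {x}) x := by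
  have : x ∈ (D.instBAF).gamma E := h.2 ▸ hxE
  exact (defends_erase hexp).mp this.2

/-- If `x` is defended and `E'` is complete in the removed framework, every
assumption leaf of `x` appears as an assumption argument in `E'`. -/
lemma asm_mem_of_complete_defends (hexp : D.Expendable x) (hx : D.WF x)
    (h : ((D.instBAF).remove x).Complete E') (hd : (D.instBAF).Defends E' x) :
    ∀ b, x.IsAsmLeaf b → ATree.asm b ∈ E' := by
  intro b hb
  have hbA := wf_asms_sub hx b hb
  have hxE' : x ∉ E' := fun h' => (h.1.1 h').2 rfl
  have hdb : (D.instBAF).Defends E' (ATree.asm b) := (defends_leaf hx).mp hd b hb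
  have hdb' : ((D.instBAF).remove x).Defends E' (ATree.asm b) :=
    (defends_rm hexp hxE' (asm_ne_x hexp hbA)).mpr hdb
  have : ATree.asm b ∈ ((D.instBAF).remove x).gamma E' :=
    ⟨⟨ABAF.WF.asm hbA, fun h' => asm_ne_x hexp hbA (Set.mem_singleton_iff.mp h')⟩, hdb'⟩
  rwa [← h.2] at this

/-- Key admissibility lemma for inserting `x`. -/
lemma admissible_insert (hexp : D.Expendable x) (hx : D.WF x)
    (hadm : ((D.instBAF).remove x).Admissible E')
    (hi : ∀ b, x.IsAsmLeaf b → ATree.asm b ∈ E')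
    (hiii : ∀ c ∈ D.clA x.asms, ATree.asm c ∈ E') :
    (D.instBAF).Admissible (insert x E') := by
  have hxE' : x ∉ E' := fun h' => (hadm.1 h').2 rfl
  have hclF : (D.instBAF).Closed E' := (closed_rm hexp hxE').mp hadm.2.1
  have hdx : (D.instBAF).Defends E' x := by
    rw [defends_leaf hx]
    intro b hb
    have hbA := wf_asms_sub hx b hb
    have : ATree.asm b ∈ ((D.instBAF).remove x).gamma E' := hadm.2.2.2 (hi b hb)
    exact (defends_rm hexp hxE' (asm_ne_x hexp hbA)).mp this.2
  refine ⟨?_, ?_, ?_, ?_⟩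
  · rintro a (rfl | ha)
    · exact hx
    · exact (hadm.1 ha).1
  · -- Closed
    apply Set.Subset.antisymm Set.subset_union_left
    rintro a (ha | ⟨ha, e, he, hsup⟩)
    · exact ha
    · rcases he with rfl | he
      · -- support from x
        obtain ⟨_, _, c, hcA, rfl, hc⟩ := hsup
        exact Or.inr (hiii c hc)
      · have : a ∈ (D.instBAF).cl E' := Or.inr ⟨ha, e, he, hsup⟩
        rw [← hclF] at this
        exact Or.inr this
  · -- ConflictFree
    rintro a (rfl | ha) b (rfl | hb) hatt
    · exact not_attacker hexp hatt
    · exact not_attacker hexp hatt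
    · -- a ∈ E' attacks x
      obtain ⟨hwa, _, b', hb', hroot⟩ := hatt
      have hb'A := wf_asms_sub hx b' hb'
      have hattb : (a, ATree.asm b') ∈ (D.instBAF).att :=
        ⟨hwa, .asm hb'A, b', .asm b', hroot⟩
      exact hadm.2.2.1 a ha (ATree.asm b') (hi b' hb')
        ⟨hattb, fun h' => hxE' (h' ▸ ha), asm_ne_x hexp hb'A⟩
    · exact hadm.2.2.1 a ha b hb
        ⟨hatt, fun h' => hxE' (h' ▸ ha), fun h' => hxE' (h' ▸ hb)⟩
  · -- insert x E' ⊆ gamma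
    rintro a (rfl | ha)
    · rw [gamma_insert hexp]
      exact ⟨hx, hdx⟩
    · rw [gamma_insert hexp]
      have := hadm.2.2.2 ha
      rw [gamma_rm hexp hxE'] at this
      exact this.1

lemma hiii_of_complete (hexp : D.Expendable x) (hx : D.WF x)
    (h : ((D.instBAF).remove x).Complete E') (hd : (D.instBAF).Defends E' x) :
    ∀ c ∈ D.clA x.asms, ATree.asm c ∈ E' := by
  rintro c ⟨⟨u, hu, rfl, hsub⟩, hcA⟩
  have hcA' : u.root ∈ D.A := by exact_mod_cast hcA
  have hune : u ≠ x := ne_x_of_root_mem hexp hcA'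
  have hxE' : x ∉ E' := fun h' => (h.1.1 h').2 rfl
  have hi := asm_mem_of_complete_defends hexp hx h hd
  -- u is defended by E'
  have hdu : (D.instBAF).Defends E' u := by
    rw [defends_leaf hu]
    intro b hb
    have hbA := wf_asms_sub hu b hb
    have : ATree.asm b ∈ ((D.instBAF).remove x).gamma E' := h.1.2.2.2 (hi b (hsub hb))
    exact (defends_rm hexp hxE' (asm_ne_x hexp hbA)).mp this.2
  have huE : u ∈ E' := by
    have : u ∈ ((D.instBAF).remove x).gamma E' :=
      ⟨⟨hu, hune⟩, (defends_rm hexp hxE' hune).mpr hdu⟩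
    rwa [← h.2] at this
  -- asm (root u) supported by u
  have hsup : (u, ATree.asm u.root) ∈ (D.instBAF).sup :=
    sup_of_witness hu hu (fun _ h => h) hcA'
  have : ATree.asm u.root ∈ ((D.instBAF).remove x).cl E' :=
    Or.inr ⟨⟨ABAF.WF.asm hcA', asm_ne_x hexp hcA'⟩, u, huE,
      hsup, hune, asm_ne_x hexp hcA'⟩
  rwa [← h.1.2.1] at this

lemma complete_insert (hexp : D.Expendable x) (hx : D.WF x)
    (h : ((D.instBAF).remove x).Complete E') (hd : (D.instBAF).Defends E' x) :
    (D.instBAF).Complete (insert x E') := by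
  have hxE' : x ∉ E' := fun h' => (h.1.1 h').2 rfl
  have hadm := admissible_insert hexp hx h.1 (asm_mem_of_complete_defends hexp hx h hd)
    (hiii_of_complete hexp hx h hd)
  refine ⟨hadm, ?_⟩
  rw [gamma_insert hexp]
  apply Set.Subset.antisymm
  · rintro a (rfl | ha)
    · exact ⟨hx, hd⟩
    · have := h.1.2.2.2 ha
      rw [gamma_rm hexp hxE'] at this
      exact this.1
  · intro a ha
    by_cases hax : a = x
    · exact hax ▸ Set.mem_insert x E'
    · apply Set.mem_insert_of_mem
      have : a ∈ ((D.instBAF).remove x).gamma E' := by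
        rw [gamma_rm hexp hxE']
        exact ⟨ha, hax⟩
      rwa [← h.2] at this

lemma complete_keep (hexp : D.Expendable x) (hx : D.WF x)
    (h : ((D.instBAF).remove x).Complete E') (hd : ¬ (D.instBAF).Defends E' x) :
    (D.instBAF).Complete E' := by
  have hxE' : x ∉ E' := fun h' => (h.1.1 h').2 rfl
  refine ⟨(admissible_rm hexp hxE').mp h.1, ?_⟩
  apply Set.Subset.antisymm
  · intro a ha
    have : a ∈ (D.instBAF).gamma E' := by
      have := h.1.2.2.2 ha
      rw [gamma_rm hexp hxE'] at this
      exact this.1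
    exact this
  · intro a ha
    have hax : a ≠ x := fun h' => hd (h' ▸ ha.2)
    have : a ∈ ((D.instBAF).remove x).gamma E' := by
      rw [gamma_rm hexp hxE']
      exact ⟨ha, hax⟩
    rwa [← h.2] at this

lemma complete_lift (hexp : D.Expendable x) (hx : D.WF x)
    (h : ((D.instBAF).remove x).Complete E') :
    ∃ E, (D.instBAF).Complete E ∧ E \ {x} = E' ∧ E' ⊆ E ∧ asmsOf E = asmsOf E' := by
  have hxE' : x ∉ E' := fun h' => (h.1.1 h').2 rfl
  by_cases hd : (D.instBAF).Defends E' x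
  · exact ⟨insert x E', complete_insert hexp hx h hd,
      Set.insert_diff_self_of_notMem hxE', Set.subset_insert x E',
      asmsOf_insert_x (asm_mem_of_complete_defends hexp hx h hd)⟩
  · exact ⟨E', complete_keep hexp hx h hd,
      Set.diff_singleton_eq_self hxE', subset_rfl, rfl⟩

end ABAFRemoval
namespace ABAFRemoval
set_option linter.unusedSectionVars false
variable {α : Type} [DecidableEq α] {D : ABAF α} {x : ATree α}
variable {E E' S : Set (ATree α)} {t : ATree α}

lemma preferred_sdiff (hexp : D.Expendable x) (hx : D.WF x)
    (h : (D.instBAF).Preferred E) : ((D.instBAF).remove x).Preferred (E \ {x}) := by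
  refine ⟨complete_sdiff hexp h.1, ?_⟩
  intro S' hS' hsub
  obtain ⟨S, hS, hSd, hsubS, _⟩ := complete_lift hexp hx hS'
  have hxcase : x ∈ E → x ∈ S := by
    intro hxE
    have hdx : (D.instBAF).Defends S' x :=
      BAF.defends_mono hsub (complete_mem_defends hexp h.1 hxE)
    by_contra hxS
    have hSS' : S = S' := by rw [← hSd, Set.diff_singleton_eq_self hxS]
    subst hSS'
    have hmem : x ∈ (D.instBAF).gamma S := ⟨hx, hdx⟩
    rw [← hS.2] at hmem
    exact hxS hmem
  have hES : E ⊆ S := by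
    intro a ha
    by_cases hax : a = x
    · exact hax ▸ hxcase (hax ▸ ha)
    · exact hsubS (hsub ⟨ha, hax⟩)
  have hSE := h.2 S hS hES
  rw [← hSd, hSE]

lemma preferred_lift (hexp : D.Expendable x) (hx : D.WF x)
    (h : ((D.instBAF).remove x).Preferred E') :
    ∃ E, (D.instBAF).Preferred E ∧ asmsOf E = asmsOf E' := by
  have hxE' : x ∉ E' := fun h' => (h.1.1.1 h').2 rfl
  by_cases hd : (D.instBAF).Defends E' x
  · refine ⟨insert x E', ⟨complete_insert hexp hx h.1 hd, ?_⟩,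
      asmsOf_insert_x (asm_mem_of_complete_defends hexp hx h.1 hd)⟩
    intro S hS hsub
    have hsub' : E' ⊆ S \ {x} := fun a ha =>
      ⟨hsub (Set.mem_insert_of_mem _ ha), fun h' => hxE' (Set.mem_singleton_iff.mp h' ▸ ha)⟩
    have hSd := h.2 (S \ {x}) (complete_sdiff hexp hS) hsub'
    have hxS : x ∈ S := hsub (Set.mem_insert x E')
    rw [← hSd, Set.insert_diff_singleton, Set.insert_eq_self.mpr hxS]
  · refine ⟨E', ⟨complete_keep hexp hx h.1 hd, ?_⟩, rfl⟩
    intro S hS hsub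
    have hsub' : E' ⊆ S \ {x} := fun a ha =>
      ⟨hsub ha, fun h' => hxE' (Set.mem_singleton_iff.mp h' ▸ ha)⟩
    have hSd := h.2 (S \ {x}) (complete_sdiff hexp hS) hsub'
    have hxS : x ∉ S := fun hxS => hd (hSd ▸ complete_mem_defends hexp hS hxS)
    rw [← hSd, Set.diff_singleton_eq_self hxS]

lemma complete_exists_iff (hexp : D.Expendable x) (hx : D.WF x) :
    (∃ S, (D.instBAF).Complete S) ↔ ∃ S', ((D.instBAF).remove x).Complete S' := by
  constructor
  · rintro ⟨S, hS⟩; exact ⟨S \ {x}, complete_sdiff hexp hS⟩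
  · rintro ⟨S', hS'⟩
    obtain ⟨S, hS, -, -, -⟩ := complete_lift hexp hx hS'
    exact ⟨S, hS⟩

lemma sInter_complete (hexp : D.Expendable x) (hx : D.WF x)
    (hne : ∃ S, (D.instBAF).Complete S) :
    ⋂₀ {S' | ((D.instBAF).remove x).Complete S'} =
      (⋂₀ {S | (D.instBAF).Complete S}) \ {x} := by
  obtain ⟨S0, hS0⟩ := hne
  apply Set.Subset.antisymm
  · intro t ht
    have htS0 : t ∈ S0 \ {x} := ht _ (complete_sdiff hexp hS0)
    exact ⟨fun S hS => (ht _ (complete_sdiff hexp hS)).1, htS0.2⟩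
  · rintro t ⟨ht, htx⟩ S' hS'
    obtain ⟨S, hS, hSd, -, -⟩ := complete_lift hexp hx hS'
    rw [← hSd]
    exact ⟨ht S hS, htx⟩

lemma grounded_sdiff (hexp : D.Expendable x) (hx : D.WF x)
    (h : (D.instBAF).Grounded E) : ((D.instBAF).remove x).Grounded (E \ {x}) := by
  obtain ⟨hadm, hcase⟩ := h
  refine ⟨adm_forward hexp hadm, ?_⟩
  rcases hcase with ⟨hne, hEq⟩ | ⟨hne, hEq⟩
  · exact Or.inl ⟨(complete_exists_iff hexp hx).mp hne,
      by rw [hEq, sInter_complete hexp hx hne]⟩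
  · refine Or.inr ⟨fun ⟨S', hS'⟩ => hne ((complete_exists_iff hexp hx).mpr ⟨S', hS'⟩), ?_⟩
    rw [hEq, Set.empty_diff]

lemma grounded_lift (hexp : D.Expendable x) (hx : D.WF x)
    (h : ((D.instBAF).remove x).Grounded E') :
    ∃ E, (D.instBAF).Grounded E ∧ asmsOf E = asmsOf E' := by
  obtain ⟨hadm, hcase⟩ := h
  have hxE' : x ∉ E' := fun h' => (hadm.1 h').2 rfl
  rcases hcase with ⟨hne, hEq⟩ | ⟨hne, hEq⟩
  · have hneF : ∃ S, (D.instBAF).Complete S := (complete_exists_iff hexp hx).mpr hne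
    by_cases hxm : x ∈ ⋂₀ {S | (D.instBAF).Complete S}
    · have hdall : ∀ S', ((D.instBAF).remove x).Complete S' → (D.instBAF).Defends S' x := by
        intro S' hS'
        by_cases hd : (D.instBAF).Defends S' x
        · exact hd
        · exact absurd (hxm _ (complete_keep hexp hx hS' hd))
            (fun h' => (hS'.1.1 h').2 rfl)
      have hi : ∀ b, x.IsAsmLeaf b → ATree.asm b ∈ E' := by
        intro b hb
        rw [hEq]
        refine Set.mem_sInter.mpr fun S' hS' => ?_
        exact asm_mem_of_complete_defends hexp hx hS' (hdall S' hS') b hb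
      have hiii : ∀ c ∈ D.clA x.asms, ATree.asm c ∈ E' := by
        intro c hc
        rw [hEq]
        refine Set.mem_sInter.mpr fun S' hS' => ?_
        exact hiii_of_complete hexp hx hS' (hdall S' hS') c hc
      refine ⟨insert x E', ⟨admissible_insert hexp hx hadm hi hiii, ?_⟩, asmsOf_insert_x hi⟩
      refine Or.inl ⟨hneF, ?_⟩
      rw [hEq, sInter_complete hexp hx hneF, Set.insert_diff_singleton,
        Set.insert_eq_self.mpr hxm]
    · refine ⟨E', ⟨(admissible_rm hexp hxE').mp hadm, Or.inl ⟨hneF, ?_⟩⟩, rfl⟩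
      rw [hEq, sInter_complete hexp hx hneF, Set.diff_singleton_eq_self hxm]
  · refine ⟨∅, ⟨BAF.admissible_empty _,
      Or.inr ⟨fun ⟨S, hS⟩ => hne ⟨S \ {x}, complete_sdiff hexp hS⟩, rfl⟩⟩, ?_⟩
    rw [hEq]

lemma stable_sdiff (hexp : D.Expendable x) (hx : D.WF x)
    (h : (D.instBAF).Stable E) : ((D.instBAF).remove x).Stable (E \ {x}) := by
  refine ⟨adm_forward hexp h.1, ?_⟩
  rintro a ⟨haF, hax⟩ haE
  have haE' : a ∉ E := fun h' => haE ⟨h', hax⟩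
  have hatt := h.2 a haF haE'
  rw [attacksArg_erase hexp] at hatt
  exact (attacksArg_rm (fun h' => h'.2 rfl) (fun h' => hax h')).mpr hatt

lemma stable_lift (hexp : D.Expendable x) (hx : D.WF x)
    (h : ((D.instBAF).remove x).Stable E') :
    ∃ E, (D.instBAF).Stable E ∧ asmsOf E = asmsOf E' := by
  have hxE' : x ∉ E' := fun h' => (h.1.1 h').2 rfl
  by_cases hall : ∀ b, x.IsAsmLeaf b → ATree.asm b ∈ E'
  · have hiii : ∀ c ∈ D.clA x.asms, ATree.asm c ∈ E' := by
      rintro c ⟨⟨u, hu, rfl, hsub⟩, hcA⟩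
      have hcA' : u.root ∈ D.A := by exact_mod_cast hcA
      have hune : u ≠ x := ne_x_of_root_mem hexp hcA'
      have huE : u ∈ E' := by
        by_contra huE
        obtain ⟨e, he, hatt⟩ := h.2 u ⟨hu, hune⟩ huE
        obtain ⟨⟨hwe, -, b, hb, hroot⟩, hex, -⟩ := hatt
        have hbA := wf_asms_sub hu b hb
        have hattb : (e, ATree.asm b) ∈ (D.instBAF).att := ⟨hwe, .asm hbA, b, .asm b, hroot⟩
        exact h.1.2.2.1 e he (ATree.asm b) (hall b (hsub hb))
          ⟨hattb, hex, asm_ne_x hexp hbA⟩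
      have hsup : (u, ATree.asm u.root) ∈ (D.instBAF).sup :=
        sup_of_witness hu hu (fun _ hh => hh) hcA'
      have : ATree.asm u.root ∈ ((D.instBAF).remove x).cl E' :=
        Or.inr ⟨⟨ABAF.WF.asm hcA', asm_ne_x hexp hcA'⟩, u, huE, hsup, hune,
          asm_ne_x hexp hcA'⟩
      rwa [← h.1.2.1] at this
    refine ⟨insert x E', ⟨admissible_insert hexp hx h.1 hall hiii, ?_⟩,
      asmsOf_insert_x hall⟩
    intro a haF haE
    have hax : a ≠ x := fun h' => haE (h' ▸ Set.mem_insert x E')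
    have haE' : a ∉ E' := fun h' => haE (Set.mem_insert_of_mem _ h')
    have := h.2 a ⟨haF, hax⟩ haE'
    rw [attacksArg_rm hxE' hax] at this
    exact attacksArg_mono (Set.subset_insert x E') this
  · push_neg at hall
    obtain ⟨b, hb, hbE⟩ := hall
    have hbA := wf_asms_sub hx b hb
    obtain ⟨e, he, hatt⟩ := h.2 (ATree.asm b) ⟨.asm hbA, asm_ne_x hexp hbA⟩ hbE
    obtain ⟨⟨hwe, -, b', hb', hroot⟩, hex, -⟩ := hatt
    have hb'b : b' = b := isAsmLeaf_asm_iff.mp hb'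
    subst hb'b
    have hattx : (D.instBAF).AttacksArg E' x := ⟨e, he, hwe, hx, b', hb, hroot⟩
    refine ⟨E', ⟨(admissible_rm hexp hxE').mp h.1, ?_⟩, rfl⟩
    intro a haF haE
    by_cases hax : a = x
    · subst hax; exact hattx
    · have := h.2 a ⟨haF, hax⟩ haE
      rwa [attacksArg_rm hxE' hax] at this

/-! pBAF level -/

lemma padm_sdiff (hexp : D.Expendable x) (hx : D.WF x)
    (h : (D.instPBAF).Admissible E) : ((D.instPBAF).remove x).Admissible (E \ {x}) := by
  refine ⟨adm_forward hexp h.1, ?_⟩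
  intro t ht hsub
  refine ⟨h.2 t ht.1 (hsub.trans (asmsOf_mono Set.diff_subset)), ht.2⟩

lemma exhaustive_asm_mem (hexp : D.Expendable x) (hx : D.WF x)
    (hG : ((D.instPBAF).remove x).Exhaustive E') (hpx : x.asms ⊆ asmsOf E') :
    ∀ b, x.IsAsmLeaf b → ATree.asm b ∈ E' := by
  intro b hb
  have hbA := wf_asms_sub hx b hb
  apply hG (ATree.asm b) ⟨ABAF.WF.asm hbA, asm_ne_x hexp hbA⟩
  intro a ha
  have hab : a = b := isAsmLeaf_asm_iff.mp ha
  subst hab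
  exact hpx hb

lemma padm_insert (hexp : D.Expendable x) (hx : D.WF x)
    (h : ((D.instPBAF).remove x).Admissible E') (hpx : x.asms ⊆ asmsOf E') :
    (D.instPBAF).Admissible (insert x E') ∧ asmsOf (insert x E') = asmsOf E' := by
  have hxE' : x ∉ E' := fun h' => (h.1.1 h').2 rfl
  have hi := exhaustive_asm_mem hexp hx h.2 hpx
  have hiii : ∀ c ∈ D.clA x.asms, ATree.asm c ∈ E' := by
    rintro c ⟨⟨u, hu, rfl, hsub⟩, hcA⟩
    have hcA' : u.root ∈ D.A := by exact_mod_cast hcA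
    have hune : u ≠ x := ne_x_of_root_mem hexp hcA'
    have huE : u ∈ E' := h.2 u ⟨hu, hune⟩ (fun a ha => hpx (hsub ha))
    have hsup := sup_of_witness hu hu (fun _ hh => hh) hcA'
    have : ATree.asm u.root ∈ ((D.instBAF).remove x).cl E' :=
      Or.inr ⟨⟨ABAF.WF.asm hcA', asm_ne_x hexp hcA'⟩, u, huE, hsup, hune,
        asm_ne_x hexp hcA'⟩
    have hclE : ((D.instBAF).remove x).Closed E' := h.1.2.1
    rwa [← hclE] at this
  have hasms := asmsOf_insert_x hi
  refine ⟨⟨admissible_insert hexp hx h.1 hi hiii, ?_⟩, hasms⟩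
  intro t ht hsub
  by_cases htx : t = x
  · exact htx ▸ Set.mem_insert x E'
  · exact Set.mem_insert_of_mem _ (h.2 t ⟨ht, htx⟩ (hsub.trans hasms.subset))

lemma padm_keep (hexp : D.Expendable x) (hx : D.WF x)
    (h : ((D.instPBAF).remove x).Admissible E') (hpx : ¬ x.asms ⊆ asmsOf E') :
    (D.instPBAF).Admissible E' := by
  have hxE' : x ∉ E' := fun h' => (h.1.1 h').2 rfl
  refine ⟨(admissible_rm hexp hxE').mp h.1, ?_⟩
  intro t ht hsub
  by_cases htx : t = x
  · exact absurd (htx ▸ hsub) hpx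
  · exact h.2 t ⟨ht, htx⟩ hsub

lemma oldprf_sdiff (hexp : D.Expendable x) (hx : D.WF x)
    (h : (D.instPBAF).OldPrf E) : ((D.instPBAF).remove x).OldPrf (E \ {x}) := by
  refine ⟨padm_sdiff hexp hx h.1, ?_⟩
  intro S' hS' hsub
  have hxS' : x ∉ S' := fun h' => (hS'.1.1 h').2 rfl
  by_cases hpx : x.asms ⊆ asmsOf S'
  · obtain ⟨hSP, -⟩ := padm_insert hexp hx hS' hpx
    have hES : E ⊆ insert x S' := by
      intro a ha
      by_cases hax : a = x
      · exact hax ▸ Set.mem_insert x S'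
      · exact Set.mem_insert_of_mem _ (hsub ⟨ha, hax⟩)
    have hSE := h.2 _ hSP hES
    rw [← hSE, Set.insert_diff_self_of_notMem hxS']
  · have hxE : x ∉ E := by
      intro hxE
      apply hpx
      intro b hb
      have hmem := closed_asm_mem hexp hx h.1.1.2.1 hxE hb
      exact mem_asmsOf.mpr ⟨ATree.asm b, hsub hmem, .asm b⟩
    have hES : E ⊆ S' := fun a ha =>
      hsub ⟨ha, fun h' => hxE (Set.mem_singleton_iff.mp h' ▸ ha)⟩
    have hSE := h.2 S' (padm_keep hexp hx hS' hpx) hES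
    rw [hSE, Set.diff_singleton_eq_self hxE]

lemma oldprf_lift (hexp : D.Expendable x) (hx : D.WF x)
    (h : ((D.instPBAF).remove x).OldPrf E') :
    ∃ E, (D.instPBAF).OldPrf E ∧ asmsOf E = asmsOf E' := by
  have hxE' : x ∉ E' := fun h' => (h.1.1.1 h').2 rfl
  by_cases hpx : x.asms ⊆ asmsOf E'
  · obtain ⟨hP, hasms⟩ := padm_insert hexp hx h.1 hpx
    refine ⟨insert x E', ⟨hP, ?_⟩, hasms⟩
    intro S hS hsub
    have hsub' : E' ⊆ S \ {x} := fun a ha =>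
      ⟨hsub (Set.mem_insert_of_mem _ ha), fun h' => hxE' (Set.mem_singleton_iff.mp h' ▸ ha)⟩
    have hSd := h.2 (S \ {x}) (padm_sdiff hexp hx hS) hsub'
    have hxS : x ∈ S := hsub (Set.mem_insert x E')
    rw [← hSd, Set.insert_diff_singleton, Set.insert_eq_self.mpr hxS]
  · refine ⟨E', ⟨padm_keep hexp hx h.1 hpx, ?_⟩, rfl⟩
    intro S hS hsub
    have hsub' : E' ⊆ S \ {x} := fun a ha =>
      ⟨hsub ha, fun h' => hxE' (Set.mem_singleton_iff.mp h' ▸ ha)⟩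
    have hSd := h.2 (S \ {x}) (padm_sdiff hexp hx hS) hsub'
    have hxS : x ∉ S := by
      intro hxS
      apply hpx
      intro b hb
      have hmem := closed_asm_mem hexp hx hS.1.2.1 hxS hb
      exact mem_asmsOf.mpr ⟨ATree.asm b, hSd ▸ hmem, .asm b⟩
    rw [← hSd, Set.diff_singleton_eq_self hxS]

lemma padm_lift (hexp : D.Expendable x) (hx : D.WF x)
    (h : ((D.instPBAF).remove x).Admissible E') :
    ∃ E, (D.instPBAF).Admissible E ∧ asmsOf E = asmsOf E' := by
  by_cases hpx : x.asms ⊆ asmsOf E'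
  · obtain ⟨hP, hasms⟩ := padm_insert hexp hx h hpx
    exact ⟨insert x E', hP, hasms⟩
  · exact ⟨E', padm_keep hexp hx h hpx, rfl⟩

end ABAFRemoval
open ABAFRemoval
/-- removing an expendable argument from the instantiated pBAF
preserves the assumption extensions under admissible, complete, oldprf,
preferred, grounded and stable semantics. -/
theorem expendable_removal_preserves_pbaf_semantics {α : Type} [DecidableEq α]
    (D : ABAF α) (x : ATree α) (hx : D.WF x) (hexp : D.Expendable x)
    (σ : Sem6) :
    {S | ∃ E, (D.instPBAF).ext σ E ∧ S = asmsOf E} =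
      {S | ∃ E, ((D.instPBAF).remove x).ext σ E ∧ S = asmsOf E} := by
  cases σ with
  | adm =>
    ext S
    simp only [Set.mem_setOf_eq]
    constructor
    · rintro ⟨E, hE, rfl⟩
      have hE' : (D.instPBAF).Admissible E := hE
      exact ⟨E \ {x}, padm_sdiff hexp hx hE',
        (asmsOf_sdiff hexp hx hE'.1.2.1).symm⟩
    · rintro ⟨E', hE', rfl⟩
      obtain ⟨E, hE, hasms⟩ := padm_lift hexp hx hE'
      exact ⟨E, hE, hasms.symm⟩
  | com =>
    ext S
    simp only [Set.mem_setOf_eq]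
    constructor
    · rintro ⟨E, hE, rfl⟩
      have hE' : (D.instBAF).Complete E := hE
      exact ⟨E \ {x}, complete_sdiff hexp hE',
        (asmsOf_sdiff hexp hx hE'.1.2.1).symm⟩
    · rintro ⟨E', hE', rfl⟩
      obtain ⟨E, hE, -, -, hasms⟩ := complete_lift hexp hx hE'
      exact ⟨E, hE, hasms.symm⟩
  | oldprf =>
    ext S
    simp only [Set.mem_setOf_eq]
    constructor
    · rintro ⟨E, hE, rfl⟩
      have hE' : (D.instPBAF).OldPrf E := hE
      exact ⟨E \ {x}, oldprf_sdiff hexp hx hE',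
        (asmsOf_sdiff hexp hx hE'.1.1.2.1).symm⟩
    · rintro ⟨E', hE', rfl⟩
      obtain ⟨E, hE, hasms⟩ := oldprf_lift hexp hx hE'
      exact ⟨E, hE, hasms.symm⟩
  | prf =>
    ext S
    simp only [Set.mem_setOf_eq]
    constructor
    · rintro ⟨E, hE, rfl⟩
      have hE' : (D.instBAF).Preferred E := hE
      exact ⟨E \ {x}, preferred_sdiff hexp hx hE',
        (asmsOf_sdiff hexp hx hE'.1.1.2.1).symm⟩
    · rintro ⟨E', hE', rfl⟩
      obtain ⟨E, hE, hasms⟩ := preferred_lift hexp hx hE'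
      exact ⟨E, hE, hasms.symm⟩
  | grd =>
    ext S
    simp only [Set.mem_setOf_eq]
    constructor
    · rintro ⟨E, hE, rfl⟩
      have hE' : (D.instBAF).Grounded E := hE
      exact ⟨E \ {x}, grounded_sdiff hexp hx hE',
        (asmsOf_sdiff hexp hx hE'.1.2.1).symm⟩
    · rintro ⟨E', hE', rfl⟩
      obtain ⟨E, hE, hasms⟩ := grounded_lift hexp hx hE'
      exact ⟨E, hE, hasms.symm⟩
  | stb =>
    ext S
    simp only [Set.mem_setOf_eq]
    constructor
    · rintro ⟨E, hE, rfl⟩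
      have hE' : (D.instBAF).Stable E := hE
      exact ⟨E \ {x}, stable_sdiff hexp hx hE',
        (asmsOf_sdiff hexp hx hE'.1.2.1).symm⟩
    · rintro ⟨E', hE', rfl⟩
      obtain ⟨E, hE, hasms⟩ := stable_lift hexp hx hE'
      exact ⟨E, hE, hasms.symm⟩
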